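/- arXiv:1111.0412 — 2 statements merged into one kernel-verified Lean document; each statement's English description precedes it below -/
import Mathlib

section
/- Let M = U ⊕ U(2) ⊕ A2(2). Then the discriminant group A_M = M*/M is isomorphic to (Z/2Z)^4 ⊕ Z/3Z, and the number of elements a of A_M with (order of a, q_M(a)) equal to (1,0), (2,0), (2,1), (3,-4/3), (6,-1/3), (6,-4/3) is 1, 5, 10, 2, 20, 10 respectively. -/
noncomputable section
open Matrix

def Mgram : Matrix (Fin 6) (Fin 6) ℚ :=
  !![0,1,0,0,0,0; 1,0,0,0,0,0; 0,0,0,2,0,0; 0,0,2,0,0,0; 0,0,0,0,-4,2; 0,0,0,0,2,-4]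

/-- bilinear form of M -/
def bilM (x y : Fin 6 → ℚ) : ℚ := dotProduct x (Mgram.mulVec y)

lemma bilM_add_left (x y z : Fin 6 → ℚ) : bilM (x + y) z = bilM x z + bilM y z :=
  add_dotProduct x y _

lemma bilM_neg_left (x z : Fin 6 → ℚ) : bilM (-x) z = -bilM x z :=
  neg_dotProduct x _

def IsInt (q : ℚ) : Prop := ∃ n : ℤ, q = n

/-- dual lattice M* inside ℚ^6 -/
def dualM : AddSubgroup (Fin 6 → ℚ) where
  carrier := {x | ∀ v : Fin 6 → ℤ, IsInt (bilM x (fun i => (v i : ℚ)))}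
  zero_mem' := fun v => ⟨0, by simp [bilM]⟩
  add_mem' := by
    rintro x y hx hy v
    obtain ⟨a, ha⟩ := hx v; obtain ⟨b, hb⟩ := hy v
    exact ⟨a + b, by rw [bilM_add_left, ha, hb]; push_cast; ring⟩
  neg_mem' := by
    rintro x hx v
    obtain ⟨a, ha⟩ := hx v
    exact ⟨-a, by rw [bilM_neg_left, ha]; push_cast; ring⟩

/-- the lattice M ⊂ M* -/
def latM : AddSubgroup dualM where
  carrier := {x | ∀ i, IsInt (x.1 i)}
  zero_mem' := fun i => ⟨0, by simp⟩
  add_mem' := by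
    rintro x y hx hy i
    obtain ⟨a, ha⟩ := hx i; obtain ⟨b, hb⟩ := hy i
    exact ⟨a + b, by show x.1 i + y.1 i = _; rw [ha, hb]; push_cast; ring⟩
  neg_mem' := by
    rintro x hx i
    obtain ⟨a, ha⟩ := hx i
    exact ⟨-a, by show -(x.1 i) = _; rw [ha]; push_cast; ring⟩

/-- discriminant group A_M = M*/M -/
def AM := dualM ⧸ latM

instance : AddCommGroup AM := by unfold AM; infer_instance

def mkAM : dualM → AM := QuotientAddGroup.mk

/-- `q_M(a) = c mod 2ℤ` -/
def qvalM (a : AM) (c : ℚ) : Prop :=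
  ∀ x : dualM, mkAM x = a → ∃ n : ℤ, bilM x.1 x.1 - c = 2 * n

/-!
The map `x ↦ Mgram *ᵥ x` identifies `M*` with `ℤ⁶` and `M` with `Mgram ℤ⁶`. Inverting `Mgram`
shows that `x` is integral exactly when its image `y` has `y₂, y₃, y₄, y₅` even and
`y₄ ≡ y₅ mod 3`, so `y ↦ (y₂, y₃, y₄, y₅ mod 2, y₄ - y₅ mod 3)` induces
`A_M ≃ (ℤ/2)⁴ × ℤ/3`. As `M` is even, `q_M` may be evaluated on the representative `Mgram⁻¹ y`,
where `9 q_M = 18 y₀ y₁ + 9 y₂ y₃ - 3 (y₄² + y₄ y₅ + y₅²)` is an integer; the six counts are then a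
finite check over the 48 elements.
-/

lemma IsInt.num_cast {q : ℚ} (h : IsInt q) : (q.num : ℚ) = q := by
  obtain ⟨n, rfl⟩ := h
  rw [Rat.num_intCast]

lemma isInt_intCast (n : ℤ) : IsInt n := ⟨n, rfl⟩

lemma isInt_intCast_div_iff {m n : ℤ} (hn : n ≠ 0) : IsInt ((m : ℚ) / n) ↔ n ∣ m := by
  constructor
  · rintro ⟨k, hk⟩
    refine ⟨k, Int.cast_injective (α := ℚ) ?_⟩
    rw [div_eq_iff (by exact_mod_cast hn)] at hk
    push_cast
    linarith
  · rintro ⟨k, rfl⟩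
    exact ⟨k, by push_cast; field_simp⟩

lemma Mgram_isSymm : Mgram.IsSymm := by
  ext i j
  fin_cases i <;> fin_cases j <;> rfl

lemma bilM_eq_mulVec_dotProduct (x y : Fin 6 → ℚ) : bilM x y = (Mgram *ᵥ x) ⬝ᵥ y := by
  rw [bilM, dotProduct_mulVec, ← mulVec_transpose, Mgram_isSymm.eq]

lemma bilM_comm (x y : Fin 6 → ℚ) : bilM x y = bilM y x := by
  rw [bilM_eq_mulVec_dotProduct, dotProduct_comm, bilM]

lemma mem_dualM_iff (x : Fin 6 → ℚ) : x ∈ dualM ↔ ∀ i, IsInt ((Mgram *ᵥ x) i) := by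
  refine ⟨fun hx i => ?_, fun hx v => ?_⟩
  · obtain ⟨n, hn⟩ := hx (Pi.single i 1)
    refine ⟨n, ?_⟩
    rw [← hn, bilM_eq_mulVec_dotProduct]
    simp [Pi.single_apply, dotProduct]
  · choose n hn using hx
    refine ⟨∑ i, n i * v i, ?_⟩
    rw [bilM_eq_mulVec_dotProduct, dotProduct]
    push_cast
    simp only [hn]

def dualCoord : dualM →+ (Fin 6 → ℤ) where
  toFun x i := ((Mgram *ᵥ x.1) i).num
  map_zero' := by ext; simp
  map_add' x y := by
    ext i
    apply Int.cast_injective (α := ℚ)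
    have hx := (mem_dualM_iff _).1 x.2
    have hy := (mem_dualM_iff _).1 y.2
    have hxy := (mem_dualM_iff _).1 (x + y).2
    simp only [Pi.add_apply, Int.cast_add]
    rw [(hx i).num_cast, (hy i).num_cast, (hxy i).num_cast, AddSubgroup.coe_add, mulVec_add,
      Pi.add_apply]

lemma cast_dualCoord (x : dualM) : ((↑) ∘ dualCoord x : Fin 6 → ℚ) = Mgram *ᵥ x.1 := by
  ext i
  exact ((mem_dualM_iff _).1 x.2 i).num_cast

def gramSolve (y : Fin 6 → ℤ) : Fin 6 → ℚ :=
  ![y 1, y 0, (y 3 : ℚ) / 2, (y 2 : ℚ) / 2, ((-(2 * y 4 + y 5) : ℤ) : ℚ) / 6,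
    ((-(y 4 + 2 * y 5) : ℤ) : ℚ) / 6]

lemma Mgram_mulVec (x : Fin 6 → ℚ) :
    Mgram *ᵥ x = ![x 1, x 0, 2 * x 3, 2 * x 2, -4 * x 4 + 2 * x 5, 2 * x 4 - 4 * x 5] := by
  ext i
  fin_cases i <;> simp [Mgram, mulVec, dotProduct, Fin.sum_univ_succ, sub_eq_add_neg]

lemma Mgram_mulVec_gramSolve (y : Fin 6 → ℤ) : Mgram *ᵥ gramSolve y = (↑) ∘ y := by
  rw [Mgram_mulVec]
  ext i
  fin_cases i <;> simp [gramSolve] <;> ring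

lemma eq_gramSolve_of_Mgram_mulVec {x : Fin 6 → ℚ} {y : Fin 6 → ℤ} (h : Mgram *ᵥ x = (↑) ∘ y) :
    x = gramSolve y := by
  rw [Mgram_mulVec] at h
  have e0 : x 1 = y 0 := congrFun h 0
  have e1 : x 0 = y 1 := congrFun h 1
  have e2 : 2 * x 3 = y 2 := congrFun h 2
  have e3 : 2 * x 2 = y 3 := congrFun h 3
  have e4 : -4 * x 4 + 2 * x 5 = y 4 := congrFun h 4
  have e5 : 2 * x 4 - 4 * x 5 = y 5 := congrFun h 5
  ext i
  fin_cases i <;> simp [gramSolve] <;> linarith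

lemma coe_eq_gramSolve_dualCoord (x : dualM) : x.1 = gramSolve (dualCoord x) :=
  eq_gramSolve_of_Mgram_mulVec (cast_dualCoord x).symm

lemma mem_latM_iff (x : dualM) : x ∈ latM ↔
    2 ∣ dualCoord x 2 ∧ 2 ∣ dualCoord x 3 ∧ 2 ∣ dualCoord x 4 ∧ 2 ∣ dualCoord x 5 ∧
      3 ∣ dualCoord x 4 - dualCoord x 5 := by
  change (∀ i, IsInt (x.1 i)) ↔ _
  rw [coe_eq_gramSolve_dualCoord x]
  have h2 (m : ℤ) : IsInt ((m : ℚ) / 2) ↔ 2 ∣ m := by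
    exact_mod_cast isInt_intCast_div_iff two_ne_zero
  have h6 (m : ℤ) : IsInt ((m : ℚ) / 6) ↔ 6 ∣ m := by
    exact_mod_cast isInt_intCast_div_iff (by norm_num)
  simp only [Fin.forall_fin_succ, IsEmpty.forall_iff, and_true, gramSolve, cons_val_zero,
    cons_val_succ, h2, h6, isInt_intCast, true_and]
  omega

abbrev AMModel := (Fin 4 → ZMod 2) × ZMod 3

def reduceCoord : (Fin 6 → ℤ) →+ AMModel where
  toFun y := (![(y 2 : ZMod 2), y 3, y 4, y 5], ((y 4 - y 5 : ℤ) : ZMod 3))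
  map_zero' := by ext i <;> [fin_cases i <;> simp; simp]
  map_add' y z := by ext i <;> [fin_cases i <;> simp; (simp; ring)]

lemma reduceCoord_eq_zero_iff (y : Fin 6 → ℤ) : reduceCoord y = 0 ↔
    2 ∣ y 2 ∧ 2 ∣ y 3 ∧ 2 ∣ y 4 ∧ 2 ∣ y 5 ∧ 3 ∣ y 4 - y 5 := by
  simp [reduceCoord, Prod.ext_iff, funext_iff, Fin.forall_fin_succ,
    ZMod.intCast_zmod_eq_zero_iff_dvd, and_assoc, -Int.cast_sub]

def toModel : dualM →+ AMModel := reduceCoord.comp dualCoord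

lemma ker_toModel : toModel.ker = latM := by
  ext x
  rw [AddMonoidHom.mem_ker, toModel, AddMonoidHom.comp_apply, reduceCoord_eq_zero_iff,
    mem_latM_iff]

-- `3 ≡ 1` and `4 ≡ 0` mod 2, `4 ≡ 1` and `3 ≡ 0` mod 3: this integral vector reduces to `g`.
def modelCoord (g : AMModel) : Fin 6 → ℤ :=
  ![0, 0, (g.1 0).val, (g.1 1).val, 3 * (g.1 2).val + 4 * g.2.val, 3 * (g.1 3).val]

lemma reduceCoord_modelCoord (g : AMModel) : reduceCoord (modelCoord g) = g := by
  obtain ⟨f, c⟩ := g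
  ext i
  · fin_cases i <;> simp [reduceCoord, modelCoord] <;> decide +revert
  · simp [reduceCoord, modelCoord]
    decide +revert

def modelLift (g : AMModel) : dualM :=
  ⟨gramSolve (modelCoord g), (mem_dualM_iff _).2 fun i => by
    rw [Mgram_mulVec_gramSolve]; exact isInt_intCast _⟩

lemma dualCoord_modelLift (g : AMModel) : dualCoord (modelLift g) = modelCoord g := by
  have h := cast_dualCoord (modelLift g)
  rw [modelLift, Mgram_mulVec_gramSolve] at h
  exact Int.cast_injective.comp_left h

lemma toModel_modelLift (g : AMModel) : toModel (modelLift g) = g := by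
  rw [toModel, AddMonoidHom.comp_apply, dualCoord_modelLift, reduceCoord_modelCoord]

def equivModel : AM ≃+ AMModel :=
  (QuotientAddGroup.quotientAddEquivOfEq ker_toModel.symm).trans
    (QuotientAddGroup.quotientKerEquivOfRightInverse toModel modelLift toModel_modelLift)

lemma equivModel_mkAM (x : dualM) : equivModel (mkAM x) = toModel x := rfl

lemma equivModel_symm_apply (g : AMModel) : equivModel.symm g = mkAM (modelLift g) := by
  rw [AddEquiv.symm_apply_eq, equivModel_mkAM, toModel_modelLift]

lemma bilM_add_add_self (x l : Fin 6 → ℚ) :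
    bilM (x + l) (x + l) = bilM x x + 2 * bilM x l + bilM l l := by
  simp only [bilM_add_left, bilM_comm _ (x + l)]
  rw [bilM_comm l x]
  ring

lemma isInt_bilM_of_mem_latM (x l : dualM) (hl : l ∈ latM) : IsInt (bilM x.1 l.1) := by
  choose v hv using hl
  rw [show l.1 = fun i => (v i : ℚ) from funext hv]
  exact x.2 v

lemma even_bilM_self_of_mem_latM (l : dualM) (hl : l ∈ latM) :
    ∃ n : ℤ, bilM l.1 l.1 = 2 * n := by
  choose v hv using hl
  refine ⟨v 0 * v 1 + 2 * v 2 * v 3 - 2 * v 4 ^ 2 + 2 * v 4 * v 5 - 2 * v 5 ^ 2, ?_⟩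
  simp [bilM_eq_mulVec_dotProduct, Mgram_mulVec, dotProduct, Fin.sum_univ_succ, hv]
  ring

lemma qvalM_mkAM_iff (x : dualM) (c : ℚ) :
    qvalM (mkAM x) c ↔ ∃ n : ℤ, bilM x.1 x.1 - c = 2 * n := by
  refine ⟨fun h => h x rfl, ?_⟩
  rintro ⟨n, hn⟩ y hy
  have hl : y - x ∈ latM := by
    simpa [sub_eq_neg_add] using neg_mem (QuotientAddGroup.eq.mp hy)
  obtain ⟨p, hp⟩ := isInt_bilM_of_mem_latM x (y - x) hl
  obtain ⟨q, hq⟩ := even_bilM_self_of_mem_latM (y - x) hl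
  have hy : y.1 = x.1 + (y - x).1 := by simp
  refine ⟨n + p + q, ?_⟩
  rw [hy, bilM_add_add_self, hp, hq]
  push_cast
  linarith

def norm9 (y : Fin 6 → ℤ) : ℤ :=
  18 * y 0 * y 1 + 9 * y 2 * y 3 - 3 * (y 4 ^ 2 + y 4 * y 5 + y 5 ^ 2)

lemma bilM_gramSolve_self (y : Fin 6 → ℤ) :
    bilM (gramSolve y) (gramSolve y) = norm9 y / 9 := by
  rw [bilM_eq_mulVec_dotProduct, Mgram_mulVec_gramSolve]
  simp [dotProduct, Fin.sum_univ_succ, gramSolve, norm9]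
  ring

lemma qvalM_iff_dvd (a : AM) {c : ℚ} {m : ℤ} (hm : 9 * c = m) :
    qvalM a c ↔ 18 ∣ norm9 (modelCoord (equivModel a)) - m := by
  obtain ⟨g, rfl⟩ := equivModel.symm.surjective a
  rw [AddEquiv.apply_symm_apply, equivModel_symm_apply, qvalM_mkAM_iff]
  change (∃ n : ℤ, bilM (gramSolve _) (gramSolve _) - c = 2 * n) ↔ _
  rw [bilM_gramSolve_self]
  refine exists_congr fun n => ?_
  rw [← @Int.cast_inj ℚ]
  push_cast
  constructor <;> intro h <;> linarith

lemma addOrderOf_eq_ite_of_nsmul_eq_zero {G : Type*} [AddMonoid G] [DecidableEq G] {p : ℕ}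
    [Fact p.Prime] (hG : ∀ x : G, p • x = 0) (x : G) : addOrderOf x = if x = 0 then 1 else p := by
  split_ifs with hx
  · rw [hx, addOrderOf_zero]
  · exact addOrderOf_eq_prime (hG x) hx

lemma addOrderOf_AMModel (g : AMModel) :
    addOrderOf g = (if g.1 = 0 then 1 else 2) * (if g.2 = 0 then 1 else 3) := by
  have h2 : ∀ f : Fin 4 → ZMod 2, 2 • f = 0 := fun f => funext fun i => by
    simpa using (by decide : ∀ a : ZMod 2, 2 • a = 0) (f i)
  have h3 : ∀ z : ZMod 3, 3 • z = 0 := by decide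
  have : Fact (Nat.Prime 3) := ⟨Nat.prime_three⟩
  rw [Prod.addOrderOf, addOrderOf_eq_ite_of_nsmul_eq_zero h2,
    addOrderOf_eq_ite_of_nsmul_eq_zero h3]
  split_ifs <;> rfl

open Finset in
lemma ncard_addOrderOf_qvalM (k : ℕ) {c : ℚ} {m : ℤ} (hm : 9 * c = m) :
    {a : AM | addOrderOf a = k ∧ qvalM a c}.ncard =
      #{g : AMModel | (if g.1 = 0 then 1 else 2) * (if g.2 = 0 then 1 else 3) = k ∧
        18 ∣ norm9 (modelCoord g) - m} := by
  have hset : {a : AM | addOrderOf a = k ∧ qvalM a c} =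
      equivModel ⁻¹' {g | (if g.1 = 0 then 1 else 2) * (if g.2 = 0 then 1 else 3) = k ∧
        18 ∣ norm9 (modelCoord g) - m} := by
    ext a
    simp only [Set.mem_ofPred_eq, Set.mem_preimage, qvalM_iff_dvd a hm, ← addOrderOf_AMModel,
      AddEquiv.addOrderOf_eq]
  rw [hset, Set.ncard_preimage_of_injective_subset_range equivModel.injective
    (by simp [equivModel.surjective.range_eq]), Set.ncard_eq_toFinset_card', Set.toFinset_ofPred]

/-- For `M = U ⊕ U(2) ⊕ A2(2)`, the discriminant group `A_M = M*/M` is isomorphic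
to `(ℤ/2)⁴ ⊕ ℤ/3`, and the number of elements `a ∈ A_M` with
`(order of a, q_M(a))` equal to `(1,0), (2,0), (2,1), (3,-4/3), (6,-1/3), (6,-4/3)`
is `1, 5, 10, 2, 20, 10` respectively. -/
theorem discriminant_group_of_M :
    Nonempty (AM ≃+ ((Fin 4 → ZMod 2) × ZMod 3)) ∧
    {a : AM | addOrderOf a = 1 ∧ qvalM a 0}.ncard = 1 ∧
    {a : AM | addOrderOf a = 2 ∧ qvalM a 0}.ncard = 5 ∧
    {a : AM | addOrderOf a = 2 ∧ qvalM a 1}.ncard = 10 ∧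
    {a : AM | addOrderOf a = 3 ∧ qvalM a (-4/3)}.ncard = 2 ∧
    {a : AM | addOrderOf a = 6 ∧ qvalM a (-1/3)}.ncard = 20 ∧
    {a : AM | addOrderOf a = 6 ∧ qvalM a (-4/3)}.ncard = 10 := by
  refine ⟨⟨equivModel⟩, ?_, ?_, ?_, ?_, ?_, ?_⟩
  · rw [ncard_addOrderOf_qvalM 1 (m := 0) (by norm_num)]; decide
  · rw [ncard_addOrderOf_qvalM 2 (m := 0) (by norm_num)]; decide
  · rw [ncard_addOrderOf_qvalM 2 (m := 9) (by norm_num)]; decide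
  · rw [ncard_addOrderOf_qvalM 3 (m := -12) (by norm_num)]; decide
  · rw [ncard_addOrderOf_qvalM 6 (m := -3) (by norm_num)]; decide
  · rw [ncard_addOrderOf_qvalM 6 (m := -12) (by norm_num)]; decide
end
end

section
/- Let R = E6(2). Every element of A_R = R*/R of order 3 with q_R-value −2/3 mod 2Z is represented only by vectors r1 ∈ R* with (r1)^2 ≤ −8/3. -/
noncomputable section
open Matrix

/-- The Gram matrix of the negative definite root lattice `E6`
(negative of the Cartan matrix). -/
def E6gram : Matrix (Fin 6) (Fin 6) ℚ :=
  !![-2,1,0,0,0,0;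
    1,-2,1,0,0,0;
    0,1,-2,1,0,1;
    0,0,1,-2,1,0;
    0,0,0,1,-2,0;
    0,0,1,0,0,-2]

/-- The bilinear form of `R = E6(2)` extended to `ℚ⁶`. -/
def bilR (x y : Fin 6 → ℚ) : ℚ := dotProduct x ((2 • E6gram).mulVec y)

/-- The inclusion `ℤ⁶ ⊂ ℚ⁶`. -/
def emb (v : Fin 6 → ℤ) : Fin 6 → ℚ := fun i => v i

/-- Positivity of the E6 quadratic form, via Cholesky decomposition. -/
lemma e6_pos (a b c d e f : ℤ) :
    a*b + b*c + c*d + d*e + c*f ≤ a^2+b^2+c^2+d^2+e^2+f^2 := by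
  nlinarith [sq_nonneg (2*a-b), sq_nonneg (3*b-2*c), sq_nonneg (4*c-3*d-3*f),
    sq_nonneg (5*d-4*e-3*f), sq_nonneg (2*e-f), sq_nonneg f]

/-- Every element of `A_R = R*/R` (for `R = E6(2)`) of order 3 with
`q_R`-value `−2/3 mod 2ℤ` is represented only by vectors `r₁ ∈ R*` with
`r₁² ≤ −8/3`: if `r₁ ∈ R*`, `3r₁ ∈ R`, `r₁ ∉ R` and
`r₁² ≡ −2/3 mod 2ℤ`, then `r₁² ≤ −8/3`. -/
theorem order_three_representatives_norm_bound (r : Fin 6 → ℚ)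
    (hdual : ∀ v : Fin 6 → ℤ, IsInt (bilR r (emb v)))
    (h3 : ∃ w : Fin 6 → ℤ, (3 : ℚ) • r = emb w)
    (hnot : ¬ ∃ w : Fin 6 → ℤ, r = emb w)
    (hq : ∃ n : ℤ, bilR r r - (-2/3) = 2 * n) :
    bilR r r ≤ -8/3 := by
  obtain ⟨w, hw⟩ := h3
  obtain ⟨n, hn⟩ := hq
  have hwi : ∀ i, r i = (w i : ℚ) / 3 := by
    intro i
    have := congrFun hw i
    simp only [Pi.smul_apply, smul_eq_mul, emb] at this
    linarith
  -- Express the norm in terms of w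
  have hB : bilR r r =
      (4 * ((w 0:ℚ)*(w 1) + (w 1)*(w 2) + (w 2)*(w 3) + (w 3)*(w 4) + (w 2)*(w 5))
        - 4 * ((w 0:ℚ)^2 + (w 1)^2 + (w 2)^2 + (w 3)^2 + (w 4)^2 + (w 5)^2)) / 9 := by
    simp only [bilR, E6gram, dotProduct, mulVec, Fin.sum_univ_succ, Fin.sum_univ_zero,
      Matrix.smul_apply, Matrix.of_apply, Matrix.cons_val_zero, Matrix.cons_val_one, Matrix.head_cons,
      Matrix.cons_val_succ, Matrix.cons_val_fin_one, hwi,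
      show (0:Fin 5).succ = (1:Fin 6) by decide,
      show ((0:Fin 4).succ).succ = (2:Fin 6) by decide,
      show (((0:Fin 3).succ).succ).succ = (3:Fin 6) by decide,
      show ((((0:Fin 2).succ).succ).succ).succ = (4:Fin 6) by decide,
      show (((((0:Fin 1).succ).succ).succ).succ).succ = (5:Fin 6) by decide,
      Matrix.cons_val_two, Matrix.cons_val_three, Matrix.cons_val_four,
      Matrix.vecHead, Matrix.vecTail, Function.comp_apply, Function.comp,
      show ![(-2:ℚ),1,0,0,0,0] 5 = 0 from rfl, show ![(1:ℚ),-2,1,0,0,0] 5 = 0 from rfl,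
      show ![(0:ℚ),1,-2,1,0,1] 5 = 1 from rfl, show ![(0:ℚ),0,1,-2,1,0] 5 = 0 from rfl,
      show ![(0:ℚ),0,0,1,-2,0] 5 = 0 from rfl, show ![(0:ℚ),0,1,0,0,-2] 5 = -2 from rfl]
    ring
  -- integer quantity
  set q : ℤ := (w 0)*(w 1) + (w 1)*(w 2) + (w 2)*(w 3) + (w 3)*(w 4) + (w 2)*(w 5)
    - ((w 0)^2 + (w 1)^2 + (w 2)^2 + (w 3)^2 + (w 4)^2 + (w 5)^2) with hqdef
  have hq0 : q ≤ 0 := by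
    have := e6_pos (w 0) (w 1) (w 2) (w 3) (w 4) (w 5)
    omega
  have heq : (18 * n - 6 : ℚ) = (4 * q : ℤ) := by
    push_cast [hqdef]
    have : bilR r r = 2 * n - 2/3 := by linarith
    rw [this] at hB
    linarith
  have heqz : 18 * n - 6 = 4 * q := by exact_mod_cast heq
  have hn1 : n ≤ -1 := by omega
  have : (n : ℚ) ≤ -1 := by exact_mod_cast hn1
  linarith
end
end
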